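/- arXiv:2101.06905 — 3 statements merged into one kernel-verified Lean document; each statement's English description precedes it below -/
import Mathlib

section
/- Fix positive reals t, α, β, η, L with ηL < 1, and define on the interval 0 < K < t/β the function g(K) = η·φ·γ(K)·(1 − (ηL/2)·(γ(K)/K − 1)), where γ(K) = (t − Kβ)/α and φ > 0 is a constant. Then g is maximized (its derivative vanishes) at K* = t / sqrt(2αβ/(ηL) + αβ + β²), i.e., dg/dK = (ηL t²)/(2αK²) − (β + ηLβ²/(2α) + ηLβ/2), which is zero precisely at K = K*. -/
open Set

/-- The paper's `g(K)` with `c = ηφ`, `κ = ηL` and `γ(K) = (t - Kβ)/α`. -/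
noncomputable def reciprocalLossBound (t α β c κ K : ℝ) : ℝ :=
  c * ((t - K * β) / α) * (1 - κ / 2 * (((t - K * β) / α) / K - 1))

theorem hasDerivAt_reciprocalLossBound (t α β c κ : ℝ) {K : ℝ} (hK : K ≠ 0) (hα : α ≠ 0) :
    HasDerivAt (reciprocalLossBound t α β c κ)
      (c / α * (κ * t ^ 2 / (2 * α * K ^ 2) - (β + κ * β ^ 2 / (2 * α) + κ * β / 2))) K := by
  have hγ : HasDerivAt (fun K : ℝ => (t - K * β) / α) (-β / α) K := by
    simpa using (((hasDerivAt_id K).mul_const β).const_sub t).div_const α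
  have hratio := hγ.fun_div (hasDerivAt_id' K) hK
  refine ((hγ.const_mul c).mul (((hratio.sub_const 1).const_mul (κ / 2)).const_sub 1)).congr_deriv ?_
  field_simp
  ring

theorem reciprocalLossBound_critical_iff {t α β κ K : ℝ} (hα : α ≠ 0) (hκ : κ ≠ 0) (hK : K ≠ 0) :
    κ * t ^ 2 / (2 * α * K ^ 2) - (β + κ * β ^ 2 / (2 * α) + κ * β / 2) = 0 ↔
      K ^ 2 * (2 * α * β / κ + α * β + β ^ 2) = t ^ 2 := by
  rw [sub_eq_zero]
  field_simp
  constructor <;> intro h <;> linear_combination -h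

theorem eq_div_sqrt_iff_sq_mul_eq {K s t : ℝ} (hK : 0 ≤ K) (ht : 0 ≤ t) (hs : 0 < s) :
    K = t / √s ↔ K ^ 2 * s = t ^ 2 := by
  rw [eq_div_iff (Real.sqrt_pos.mpr hs).ne', ← pow_left_inj₀ (by positivity) ht two_ne_zero,
    mul_pow, Real.sq_sqrt hs.le]

theorem stmt_3_general (t α β η L φ : ℝ) (ht : 0 < t) (hα : 0 < α) (hβ : 0 < β)
    (hη : 0 < η) (hL : 0 < L) (hφ : 0 < φ) :
    ∀ K ∈ Ioo (0 : ℝ) (t / β),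
      HasDerivAt
        (fun K : ℝ =>
          η * φ * ((t - K * β) / α) *
            (1 - η * L / 2 * (((t - K * β) / α) / K - 1)))
        (η * φ / α *
          (η * L * t ^ 2 / (2 * α * K ^ 2) -
            (β + η * L * β ^ 2 / (2 * α) + η * L * β / 2))) K ∧
      (η * φ / α *
          (η * L * t ^ 2 / (2 * α * K ^ 2) -
            (β + η * L * β ^ 2 / (2 * α) + η * L * β / 2)) = 0 ↔
        K = t / Real.sqrt (2 * α * β / (η * L) + α * β + β ^ 2)) := by
  rintro K ⟨hK, -⟩
  refine ⟨hasDerivAt_reciprocalLossBound t α β (η * φ) (η * L) hK.ne' hα.ne', ?_⟩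
  rw [mul_eq_zero, or_iff_right (by positivity),
    reciprocalLossBound_critical_iff hα.ne' (by positivity) hK.ne',
    eq_div_sqrt_iff_sq_mul_eq hK.le ht.le (by positivity)]

/-- Theorem 3: with `γ(K) = (t − Kβ)/α` and
`g(K) = ηφ·γ(K)·(1 − (ηL/2)(γ(K)/K − 1))`, the derivative of `g` on `(0, t/β)` is
`(ηφ/α)·[ηLt²/(2αK²) − (β + ηLβ²/(2α) + ηLβ/2)]`, and it vanishes precisely at
`K* = t / √(2αβ/(ηL) + αβ + β²)`. -/
theorem stmt_3 (t α β η L φ : ℝ) (ht : 0 < t) (hα : 0 < α) (hβ : 0 < β)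
    (hη : 0 < η) (hL : 0 < L) (hηL : η * L < 1) (hφ : 0 < φ) :
    ∀ K ∈ Ioo (0 : ℝ) (t / β),
      HasDerivAt
        (fun K : ℝ =>
          η * φ * ((t - K * β) / α) *
            (1 - η * L / 2 * (((t - K * β) / α) / K - 1)))
        (η * φ / α *
          (η * L * t ^ 2 / (2 * α * K ^ 2) -
            (β + η * L * β ^ 2 / (2 * α) + η * L * β / 2))) K ∧
      (η * φ / α *
          (η * L * t ^ 2 / (2 * α * K ^ 2) -
            (β + η * L * β ^ 2 / (2 * α) + η * L * β / 2)) = 0 ↔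
        K = t / Real.sqrt (2 * α * β / (η * L) + α * β + β ^ 2)) :=
  stmt_3_general t α β η L φ ht hα hβ hη hL hφ
end

section
/- With K* = t / sqrt(2αβ/(ηL) + αβ + β²), the optimal total mining time βK* = tβ / sqrt(2αβ/(ηL) + αβ + β²) = t / sqrt(2α/(ηLβ) + α/β + 1) is strictly increasing in β, for fixed t, α, η, L > 0 with ηL < 1. -/
/-- The optimal total mining time `βK* = tβ/√(2αβ/(ηL) + αβ + β²) = t/√(2α/(ηLβ) + α/β + 1)`
is strictly increasing in `β`. -/
theorem stmt_6 (t α η L : ℝ) (ht : 0 < t) (hα : 0 < α) (hη : 0 < η) (hL : 0 < L)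
    (hηL : η * L < 1) :
    (∀ β : ℝ, 0 < β →
      β * (t / Real.sqrt (2 * α * β / (η * L) + α * β + β ^ 2)) =
        t / Real.sqrt (2 * α / (η * L * β) + α / β + 1)) ∧
    StrictMonoOn (fun β : ℝ =>
      β * (t / Real.sqrt (2 * α * β / (η * L) + α * β + β ^ 2))) (Set.Ioi 0) := by
  have hηL0 : 0 < η * L := mul_pos hη hL
  have hFpos : ∀ β : ℝ, 0 < β → 0 < 2 * α / (η * L * β) + α / β + 1 := by
    intro β hβ
    have h1 : 0 < 2 * α / (η * L * β) := div_pos (by linarith) (mul_pos hηL0 hβ)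
    have h2 : 0 < α / β := div_pos hα hβ
    linarith
  have key : ∀ β : ℝ, 0 < β →
      β * (t / Real.sqrt (2 * α * β / (η * L) + α * β + β ^ 2)) =
        t / Real.sqrt (2 * α / (η * L * β) + α / β + 1) := by
    intro β hβ
    have hE : 2 * α * β / (η * L) + α * β + β ^ 2
        = β ^ 2 * (2 * α / (η * L * β) + α / β + 1) := by
      field_simp
    rw [hE, Real.sqrt_mul (by positivity), Real.sqrt_sq hβ.le]
    have hs : 0 < Real.sqrt (2 * α / (η * L * β) + α / β + 1) :=
      Real.sqrt_pos.mpr (hFpos β hβ)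
    field_simp
  refine ⟨key, ?_⟩
  intro a ha b hb hab
  simp only [Set.mem_Ioi] at ha hb
  simp only [key a ha, key b hb]
  have hFlt : 2 * α / (η * L * b) + α / b + 1 < 2 * α / (η * L * a) + α / a + 1 := by
    have h1 : 2 * α / (η * L * b) < 2 * α / (η * L * a) := by
      apply div_lt_div_of_pos_left (by linarith) (mul_pos hηL0 ha)
      exact mul_lt_mul_of_pos_left hab hηL0
    have h2 : α / b < α / a := div_lt_div_of_pos_left hα ha hab
    linarith
  have hsb : 0 < Real.sqrt (2 * α / (η * L * b) + α / b + 1) :=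
    Real.sqrt_pos.mpr (hFpos b hb)
  have hslt : Real.sqrt (2 * α / (η * L * b) + α / b + 1)
      < Real.sqrt (2 * α / (η * L * a) + α / a + 1) :=
    Real.sqrt_lt_sqrt (hFpos b hb).le hFlt
  exact div_lt_div_of_pos_left ht hsb hslt
end

section
/- Fix constants t, α, β, δ, ξ, L, η, ε, φ > 0 with ηL < 1, set λ = 1 + ηL and γ(K) = (t − Kβ)/α, and define g(K) = γ(K)·η·φ − (δξK/L·(λ^{γ(K)/K} − 1) − ηξδγ(K)) / ε² on the interval where γ(K) > 0 and g(K) > 0. Then G(K) = 1/g(K) is convex in K on that interval. -/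
open Set

/-! Since `λ ^ (γ(K) / K) = λ ^ (t / (α K)) / λ ^ (β / α)`, for `K > 0` we have
`g(K) = A - K f(t / (α K))` with `f u = R λ ^ u - B` convex (`R ≥ 0`). The perspective
`K ↦ K f(c / K)` of a convex function is convex, so `g` is concave, and the reciprocal of a
positive concave function is convex. -/

theorem ConvexOn.perspective {f : ℝ → ℝ} (hf : ConvexOn ℝ univ f) (c : ℝ) :
    ConvexOn ℝ (Ioi 0) fun x => x * f (c / x) := by
  refine ⟨convex_Ioi 0, fun x (hx : 0 < x) y (hy : 0 < y) a b ha hb hab => ?_⟩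
  have hz : 0 < a * x + b * y := (convex_Ioi (0 : ℝ)) hx hy ha hb hab
  set z := a * x + b * y
  have hw : a * x / z + b * y / z = 1 := by rw [← add_div, div_self hz.ne']
  have hc : (a * x / z) • (c / x) + (b * y / z) • (c / y) = c / z := by
    simp only [smul_eq_mul]; field_simp; linear_combination c * hab
  calc z * f (c / z)
      ≤ z * ((a * x / z) • f (c / x) + (b * y / z) • f (c / y)) := by
        rw [← hc]
        gcongr
        exact hf.2 trivial trivial (by positivity) (by positivity) hw
    _ = a • (x * f (c / x)) + b • (y * f (c / y)) := by
        simp only [smul_eq_mul]; field_simp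

theorem ConcaveOn.convexOn_one_div {s : Set ℝ} {g : ℝ → ℝ} (hg : ConcaveOn ℝ s g)
    (hpos : ∀ x ∈ s, 0 < g x) : ConvexOn ℝ s fun x => 1 / g x := by
  refine ⟨hg.1, fun x hx y hy a b ha hb hab => ?_⟩
  have hmean : 0 < a * g x + b * g y := (convex_Ioi (0 : ℝ)) (hpos x hx) (hpos y hy) ha hb hab
  have hinv := (convexOn_zpow (𝕜 := ℝ) (-1)).2 (hpos x hx) (hpos y hy) ha hb hab
  simp only [zpow_neg_one, smul_eq_mul, ← one_div] at hinv ⊢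
  exact (one_div_le_one_div_of_le hmean (hg.2 hx hy ha hb hab)).trans hinv

theorem sub_mul_div_div_eq {t α β K : ℝ} (hK : K ≠ 0) :
    (t - K * β) / α / K = t / α / K - β / α := by
  field_simp

theorem stmt_11_general (t α β δ ξ L η ε φ : ℝ)
    (hδ : 0 < δ) (hξ : 0 < ξ)
    (hL : 0 < L) (hη : 0 < η) :
    ∀ s : Set ℝ, Convex ℝ s →
      (∀ K ∈ s, 0 < K ∧ 0 < (t - K * β) / α ∧
        0 < ((t - K * β) / α) * η * φ -
          (δ * ξ * K / L * ((1 + η * L) ^ (((t - K * β) / α) / K) - 1) -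
            η * ξ * δ * ((t - K * β) / α)) / ε ^ 2) →
      ConvexOn ℝ s (fun K =>
        1 / (((t - K * β) / α) * η * φ -
          (δ * ξ * K / L * ((1 + η * L) ^ (((t - K * β) / α) / K) - 1) -
            η * ξ * δ * ((t - K * β) / α)) / ε ^ 2)) := by
  intro s hs hmem
  have hbase : 0 < 1 + η * L := by positivity
  set A := t / α * (η * φ + η * ξ * δ / ε ^ 2)
  set B := δ * ξ / (L * ε ^ 2) - β / α * (η * φ + η * ξ * δ / ε ^ 2)
  set R := δ * ξ / (L * ε ^ 2) / (1 + η * L) ^ (β / α)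
  have hR : 0 ≤ R := by positivity
  have hf : ConvexOn ℝ univ fun u : ℝ => R * (1 + η * L) ^ u + -B :=
    ((convexOn_rpow_left hbase).smul hR).add_const (-B)
  have hconcave : ConcaveOn ℝ s fun K => A - K * (R * (1 + η * L) ^ (t / α / K) + -B) :=
    (concaveOn_const A hs).sub ((hf.perspective (t / α)).subset (fun K hK => (hmem K hK).1) hs)
  refine (hconcave.congr fun K hK => ?_).convexOn_one_div fun K hK => (hmem K hK).2.2
  rw [sub_mul_div_div_eq (hmem K hK).1.ne', Real.rpow_sub hbase]
  ring

/-- Theorem 2: with `λ = 1 + ηL`, `γ(K) = (t − Kβ)/α` and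
`g(K) = γ(K)ηφ − (δξK/L·(λ^{γ(K)/K} − 1) − ηξδγ(K))/ε²`, the upper bound
`G(K) = 1/g(K)` is convex in `K` on any convex subset of the region where
`K > 0`, `γ(K) > 0` and `g(K) > 0`. -/
theorem stmt_11 (t α β δ ξ L η ε φ : ℝ)
    (ht : 0 < t) (hα : 0 < α) (hβ : 0 < β) (hδ : 0 < δ) (hξ : 0 < ξ)
    (hL : 0 < L) (hη : 0 < η) (hε : 0 < ε) (hφ : 0 < φ) (hηL : η * L < 1) :
    ∀ s : Set ℝ, Convex ℝ s →
      (∀ K ∈ s, 0 < K ∧ 0 < (t - K * β) / α ∧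
        0 < ((t - K * β) / α) * η * φ -
          (δ * ξ * K / L * ((1 + η * L) ^ (((t - K * β) / α) / K) - 1) -
            η * ξ * δ * ((t - K * β) / α)) / ε ^ 2) →
      ConvexOn ℝ s (fun K =>
        1 / (((t - K * β) / α) * η * φ -
          (δ * ξ * K / L * ((1 + η * L) ^ (((t - K * β) / α) / K) - 1) -
            η * ξ * δ * ((t - K * β) / α)) / ε ^ 2)) :=
  stmt_11_general t α β δ ξ L η ε φ hδ hξ hL hη
end
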